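/- arXiv:2103.11433 — 3 statements merged into one kernel-verified Lean document; each statement's English description precedes it below -/
import Mathlib

section
/- Let μ be a rotation-invariant probability measure on ℝⁿ with absolutely continuous density, let K be a convex body containing the origin, and let B(K) be the Euclidean ball centered at the origin with μ(B(K)) = μ(K). Then for every q > 0, ∫_K |x|^q dμ(x) ≥ ∫_{B(K)} |x|^q dμ(x), and for every q < 0, ∫_K |x|^q dμ(x) ≤ ∫_{B(K)} |x|^q dμ(x). -/
open MeasureTheory Real Set

/-- Moment comparison for rotation-invariant measures: among convex bodies containing the
origin of given measure, the centered ball minimizes positive moments of `|x|` and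
maximizes negative ones. -/
theorem stmt2 (n : ℕ) (f : ℝ → ℝ)
    (μ : Measure (EuclideanSpace ℝ (Fin n)))
    (hμ : μ = volume.withDensity fun x => ENNReal.ofReal (f ‖x‖))
    (hprob : IsProbabilityMeasure μ)
    (K : Set (EuclideanSpace ℝ (Fin n)))
    (hconv : Convex ℝ K) (hcomp : IsCompact K)
    (h0 : (0 : EuclideanSpace ℝ (Fin n)) ∈ K) (hmeas : MeasurableSet K)
    (R : ℝ) (hR : 0 ≤ R)
    (hball : μ (Metric.closedBall (0 : EuclideanSpace ℝ (Fin n)) R) = μ K)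
    (q : ℝ)
    (hint1 : IntegrableOn (fun x => ‖x‖ ^ q) K μ)
    (hint2 : IntegrableOn (fun x => ‖x‖ ^ q)
      (Metric.closedBall (0 : EuclideanSpace ℝ (Fin n)) R) μ) :
    (0 < q →
      (∫ x in Metric.closedBall (0 : EuclideanSpace ℝ (Fin n)) R, ‖x‖ ^ q ∂μ)
        ≤ ∫ x in K, ‖x‖ ^ q ∂μ) ∧
    (q < 0 →
      (∫ x in K, ‖x‖ ^ q ∂μ)
        ≤ ∫ x in Metric.closedBall (0 : EuclideanSpace ℝ (Fin n)) R, ‖x‖ ^ q ∂μ) := by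
  set B := Metric.closedBall (0 : EuclideanSpace ℝ (Fin n)) R with hB
  rcases subsingleton_or_nontrivial (EuclideanSpace ℝ (Fin n)) with hs | hn
  · have hKB : K = B := by
      apply Set.Subset.antisymm
      · intro x hx
        have hx0 : x = 0 := Subsingleton.elim x 0
        rw [hx0, hB]
        exact Metric.mem_closedBall_self hR
      · intro x hx
        have hx0 : x = 0 := Subsingleton.elim x 0
        rwa [hx0]
    rw [hKB]
    exact ⟨fun _ => le_rfl, fun _ => le_rfl⟩
  by_cases hR0 : R = 0
  · have hvol : (volume : Measure (EuclideanSpace ℝ (Fin n))) {0} = 0 := measure_singleton 0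
    have hμ0 : μ ({0} : Set (EuclideanSpace ℝ (Fin n))) = 0 := by
      rw [hμ]; exact (withDensity_absolutelyContinuous _ _) hvol
    have hBset : B = {0} := by rw [hB, hR0, Metric.closedBall_zero]
    have hμB : μ B = 0 := by rw [hBset]; exact hμ0
    have hμK : μ K = 0 := by rw [← hball]; exact hμB
    have h1 : μ.restrict K = 0 := Measure.restrict_eq_zero.mpr hμK
    have h2 : μ.restrict B = 0 := Measure.restrict_eq_zero.mpr hμB
    rw [h1, h2]
    simp
  have hRpos : 0 < R := lt_of_le_of_ne hR (Ne.symm hR0)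
  have hBmeas : MeasurableSet B := measurableSet_closedBall
  have hfin : μ (K ∩ B) ≠ ⊤ := measure_ne_top μ _
  have hmass : μ (K \ B) = μ (B \ K) := by
    have h1 : μ (K ∩ B) + μ (K \ B) = μ K := measure_inter_add_diff K hBmeas
    have h2 : μ (B ∩ K) + μ (B \ K) = μ B := measure_inter_add_diff B hmeas
    rw [Set.inter_comm] at h2
    have h3 : μ (K ∩ B) + μ (K \ B) = μ (K ∩ B) + μ (B \ K) := by
      rw [h1, h2, hball]
    exact (ENNReal.add_right_inj hfin).mp h3
  have hiK1 : IntegrableOn (fun x => ‖x‖ ^ q) (K ∩ B) μ :=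
    hint1.mono_set Set.inter_subset_left
  have hiK2 : IntegrableOn (fun x => ‖x‖ ^ q) (K \ B) μ :=
    hint1.mono_set Set.diff_subset
  have hiB2 : IntegrableOn (fun x => ‖x‖ ^ q) (B \ K) μ :=
    hint2.mono_set Set.diff_subset
  have hdK : Disjoint (K ∩ B) (K \ B) :=
    Set.disjoint_sdiff_right.mono_left Set.inter_subset_right
  have hdB : Disjoint (K ∩ B) (B \ K) :=
    Set.disjoint_sdiff_right.mono_left Set.inter_subset_left
  have hsplitK : (∫ x in K, ‖x‖ ^ q ∂μ)
      = (∫ x in K ∩ B, ‖x‖ ^ q ∂μ) + ∫ x in K \ B, ‖x‖ ^ q ∂μ := by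
    rw [← setIntegral_union hdK (hmeas.diff hBmeas) hiK1 hiK2, Set.inter_union_diff]
  have hsplitB : (∫ x in B, ‖x‖ ^ q ∂μ)
      = (∫ x in K ∩ B, ‖x‖ ^ q ∂μ) + ∫ x in B \ K, ‖x‖ ^ q ∂μ := by
    rw [← setIntegral_union hdB (hBmeas.diff hmeas) hiK1 hiB2, Set.inter_comm,
      Set.inter_union_diff]
  have hconst1 : IntegrableOn (fun _ : EuclideanSpace ℝ (Fin n) => R ^ q) (K \ B) μ :=
    integrableOn_const (measure_lt_top μ _).ne
  have hconst2 : IntegrableOn (fun _ : EuclideanSpace ℝ (Fin n) => R ^ q) (B \ K) μ :=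
    integrableOn_const (measure_lt_top μ _).ne
  have hmemKB : ∀ x ∈ K \ B, R ≤ ‖x‖ := by
    intro x hx
    have := hx.2
    rw [hB, Metric.mem_closedBall, dist_zero_right] at this
    exact le_of_not_ge this
  have hmemBK : ∀ x ∈ B \ K, 0 < ‖x‖ ∧ ‖x‖ ≤ R := by
    intro x hx
    have hx0 : x ≠ 0 := fun h => hx.2 (h ▸ h0)
    have : ‖x‖ ≤ R := by
      have := hx.1; rwa [hB, Metric.mem_closedBall, dist_zero_right] at this
    exact ⟨norm_pos_iff.mpr hx0, this⟩
  have hmassR : (μ (K \ B)).toReal = (μ (B \ K)).toReal := by rw [hmass]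
  constructor
  · intro hq
    have hle1 : (∫ x in B \ K, ‖x‖ ^ q ∂μ) ≤ (μ (B \ K)).toReal * R ^ q := by
      calc (∫ x in B \ K, ‖x‖ ^ q ∂μ) ≤ ∫ _ in B \ K, R ^ q ∂μ := by
            apply setIntegral_mono_on hiB2 hconst2 (hBmeas.diff hmeas)
            intro x hx
            exact Real.rpow_le_rpow (norm_nonneg x) (hmemBK x hx).2 hq.le
        _ = (μ (B \ K)).toReal * R ^ q := by rw [setIntegral_const, smul_eq_mul, measureReal_def]
    have hle2 : (μ (K \ B)).toReal * R ^ q ≤ ∫ x in K \ B, ‖x‖ ^ q ∂μ := by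
      calc (μ (K \ B)).toReal * R ^ q = ∫ _ in K \ B, R ^ q ∂μ := by
            rw [setIntegral_const, smul_eq_mul, measureReal_def]
        _ ≤ ∫ x in K \ B, ‖x‖ ^ q ∂μ := by
            apply setIntegral_mono_on hconst1 hiK2 (hmeas.diff hBmeas)
            intro x hx
            exact Real.rpow_le_rpow hR (hmemKB x hx) hq.le
    rw [hsplitK, hsplitB]
    have : (∫ x in B \ K, ‖x‖ ^ q ∂μ) ≤ ∫ x in K \ B, ‖x‖ ^ q ∂μ :=
      hle1.trans (by rw [← hmassR] at *; exact hle2)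
    linarith
  · intro hq
    have hle1 : (∫ x in K \ B, ‖x‖ ^ q ∂μ) ≤ (μ (K \ B)).toReal * R ^ q := by
      calc (∫ x in K \ B, ‖x‖ ^ q ∂μ) ≤ ∫ _ in K \ B, R ^ q ∂μ := by
            apply setIntegral_mono_on hiK2 hconst1 (hmeas.diff hBmeas)
            intro x hx
            exact Real.rpow_le_rpow_of_nonpos hRpos (hmemKB x hx) hq.le
        _ = (μ (K \ B)).toReal * R ^ q := by rw [setIntegral_const, smul_eq_mul, measureReal_def]
    have hle2 : (μ (B \ K)).toReal * R ^ q ≤ ∫ x in B \ K, ‖x‖ ^ q ∂μ := by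
      calc (μ (B \ K)).toReal * R ^ q = ∫ _ in B \ K, R ^ q ∂μ := by
            rw [setIntegral_const, smul_eq_mul, measureReal_def]
        _ ≤ ∫ x in B \ K, ‖x‖ ^ q ∂μ := by
            apply setIntegral_mono_on hconst2 hiB2 (hBmeas.diff hmeas)
            intro x hx
            exact Real.rpow_le_rpow_of_nonpos (hmemBK x hx).1 (hmemBK x hx).2 hq.le
    rw [hsplitK, hsplitB]
    have : (∫ x in K \ B, ‖x‖ ^ q ∂μ) ≤ ∫ x in B \ K, ‖x‖ ^ q ∂μ :=
      hle1.trans (by rw [hmassR] at *; exact hle2)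
    linarith
end

section
/- Let K be a Borel measurable subset of ℝ and let f, g : K → ℝ be non-negative measurable functions in L²(γ₁, K), where γ₁ is the one-dimensional standard Gaussian measure. Let f*, g* denote their Ehrhard rearrangements (defined on the half-line H_K = (−∞, ψ^{-1}(γ₁(K))] by requiring that the level set {f* > t} is the left half-line of the same Gaussian measure as {f > t}). Then ∫_K f g dγ₁ ≤ ∫_{H_K} f* g* dγ₁. -/
open MeasureTheory Real Set

/-- The one-dimensional standard Gaussian measure. -/
noncomputable def stdGaussian1 : Measure ℝ :=
  volume.withDensity fun x =>
    ENNReal.ofReal ((2 * π) ^ (-(1 : ℝ) / 2) * Real.exp (-x ^ 2 / 2))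

/-!
By the layer-cake formula applied twice, `∫ f g = ∫∫_{s,t > 0} γ({f > s} ∩ {g > t})`, so it
suffices to compare the measures of intersections of superlevel sets. The superlevel sets of
`f*` and `g*` are lower sets of `ℝ`, hence nested, so the intersection of two of them has measure
`min(γ{f > s}, γ{g > t})`, which bounds `γ({f > s} ∩ {g > t})`.
-/

section LayerCake

variable {α : Type*} [MeasurableSpace α]

theorem lintegral_ofReal_mul_eq_lintegral_lintegral_measure_inter (μ : Measure α)
    {f g : α → ℝ} (hf : Measurable f) (hg : Measurable g) (hf0 : 0 ≤ᵐ[μ] f)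
    (hg0 : 0 ≤ᵐ[μ] g) :
    ∫⁻ x, ENNReal.ofReal (f x) * ENNReal.ofReal (g x) ∂μ
      = ∫⁻ s in Ioi 0, ∫⁻ t in Ioi 0, μ ({x | s < f x} ∩ {x | t < g x}) := by
  set ν := μ.withDensity fun x => ENNReal.ofReal (g x)
  have hν : ∀ s, ν {x | s < f x} = ∫⁻ t in Ioi 0, μ ({x | s < f x} ∩ {x | t < g x}) := by
    intro s
    have hs : MeasurableSet {x | s < f x} := measurableSet_lt measurable_const hf
    rw [withDensity_apply _ hs, lintegral_eq_lintegral_meas_lt _ (ae_restrict_of_ae hg0)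
      hg.aemeasurable]
    refine lintegral_congr fun t => ?_
    rw [Measure.restrict_apply (measurableSet_lt measurable_const hg), inter_comm]
  calc ∫⁻ x, ENNReal.ofReal (f x) * ENNReal.ofReal (g x) ∂μ
      = ∫⁻ x, ENNReal.ofReal (f x) ∂ν := by
        rw [lintegral_withDensity_eq_lintegral_mul _ hg.ennreal_ofReal hf.ennreal_ofReal]
        simp only [Pi.mul_apply, mul_comm]
    _ = ∫⁻ s in Ioi 0, ν {x | s < f x} :=
        lintegral_eq_lintegral_meas_lt ν
          ((withDensity_absolutelyContinuous μ _).ae_le hf0) hf.aemeasurable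
    _ = _ := lintegral_congr hν

theorem setLIntegral_ofReal_mul_eq_lintegral_lintegral_measure_inter (μ : Measure α)
    {A : Set α} (hA : MeasurableSet A) {f g : α → ℝ} (hf : Measurable f) (hg : Measurable g)
    (hf0 : ∀ x ∈ A, 0 ≤ f x) (hg0 : ∀ x ∈ A, 0 ≤ g x) :
    ∫⁻ x in A, ENNReal.ofReal (f x) * ENNReal.ofReal (g x) ∂μ
      = ∫⁻ s in Ioi 0, ∫⁻ t in Ioi 0, μ ({x ∈ A | s < f x} ∩ {x ∈ A | t < g x}) := by
  rw [lintegral_ofReal_mul_eq_lintegral_lintegral_measure_inter _ hf hg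
    ((ae_restrict_mem hA).mono hf0) ((ae_restrict_mem hA).mono hg0)]
  refine lintegral_congr fun s => lintegral_congr fun t => ?_
  rw [Measure.restrict_apply
    ((measurableSet_lt measurable_const hf).inter (measurableSet_lt measurable_const hg))]
  congr 1
  ext x
  simp only [mem_inter_iff, mem_ofPred_eq]
  tauto

theorem setLIntegral_ofReal_mul_le_of_measure_superlevel_inter_le (μ : Measure α)
    {A B : Set α} (hA : MeasurableSet A) (hB : MeasurableSet B) {f g f' g' : α → ℝ}
    (hf : Measurable f) (hg : Measurable g) (hf' : Measurable f') (hg' : Measurable g')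
    (hf0 : ∀ x ∈ A, 0 ≤ f x) (hg0 : ∀ x ∈ A, 0 ≤ g x)
    (hf'0 : ∀ x ∈ B, 0 ≤ f' x) (hg'0 : ∀ x ∈ B, 0 ≤ g' x)
    (hlev : ∀ s t : ℝ, 0 < s → 0 < t →
      μ ({x ∈ A | s < f x} ∩ {x ∈ A | t < g x}) ≤ μ ({x ∈ B | s < f' x} ∩ {x ∈ B | t < g' x})) :
    ∫⁻ x in A, ENNReal.ofReal (f x) * ENNReal.ofReal (g x) ∂μ
      ≤ ∫⁻ x in B, ENNReal.ofReal (f' x) * ENNReal.ofReal (g' x) ∂μ := by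
  rw [setLIntegral_ofReal_mul_eq_lintegral_lintegral_measure_inter μ hA hf hg hf0 hg0,
    setLIntegral_ofReal_mul_eq_lintegral_lintegral_measure_inter μ hB hf' hg' hf'0 hg'0]
  refine setLIntegral_mono' measurableSet_Ioi fun s hs => ?_
  exact setLIntegral_mono' measurableSet_Ioi fun t ht => hlev s t hs ht

theorem setIntegral_mul_eq_toReal_setLIntegral (μ : Measure α) {A : Set α}
    (hA : MeasurableSet A) {f g : α → ℝ} (hf : Measurable f) (hg : Measurable g)
    (hf0 : ∀ x ∈ A, 0 ≤ f x) (hg0 : ∀ x ∈ A, 0 ≤ g x) :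
    ∫ x in A, f x * g x ∂μ
      = (∫⁻ x in A, ENNReal.ofReal (f x) * ENNReal.ofReal (g x) ∂μ).toReal := by
  rw [integral_eq_lintegral_of_nonneg_ae
    ((ae_restrict_mem hA).mono fun x hx => mul_nonneg (hf0 x hx) (hg0 x hx))
    (hf.mul hg).aestronglyMeasurable]
  congr 1
  exact setLIntegral_congr_fun hA fun x hx => ENNReal.ofReal_mul (hf0 x hx)

end LayerCake

theorem isLowerSet_sep_Iic_lt_of_antitoneOn {α β : Type*} [Preorder α] [Preorder β]
    {φ : α → β} {c : α} (hφ : AntitoneOn φ (Iic c)) (s : β) :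
    IsLowerSet {x ∈ Iic c | s < φ x} := fun _ b hba ha =>
  have hb : b ∈ Iic c := hba.trans ha.1
  ⟨hb, ha.2.trans_le (hφ hb ha.1 hba)⟩

theorem measure_inter_le_measure_inter_of_isLowerSet {α : Type*} [LinearOrder α]
    [MeasurableSpace α] {μ : Measure α} {S T S' T' : Set α} (hS' : IsLowerSet S')
    (hT' : IsLowerSet T') (hS : μ S ≤ μ S') (hT : μ T ≤ μ T') :
    μ (S ∩ T) ≤ μ (S' ∩ T') := by
  rcases hS'.total hT' with h | h
  · rw [inter_eq_left.mpr h]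
    exact (measure_mono inter_subset_left).trans hS
  · rw [inter_eq_right.mpr h]
    exact (measure_mono inter_subset_right).trans hT

theorem stmt5_general (K : Set ℝ) (hK : MeasurableSet K)
    (f g fstar gstar : ℝ → ℝ)
    (hf0 : ∀ x ∈ K, 0 ≤ f x) (hg0 : ∀ x ∈ K, 0 ≤ g x)
    (hfs0 : ∀ x, 0 ≤ fstar x) (hgs0 : ∀ x, 0 ≤ gstar x)
    (hfm : Measurable f) (hgm : Measurable g)
    (hfsm : Measurable fstar) (hgsm : Measurable gstar)
    (c : ℝ)
    (hfanti : AntitoneOn fstar (Set.Iic c))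
    (hganti : AntitoneOn gstar (Set.Iic c))
    (hflev : ∀ t : ℝ, 0 ≤ t →
      stdGaussian1 {x ∈ Set.Iic c | t < fstar x} = stdGaussian1 {x ∈ K | t < f x})
    (hglev : ∀ t : ℝ, 0 ≤ t →
      stdGaussian1 {x ∈ Set.Iic c | t < gstar x} = stdGaussian1 {x ∈ K | t < g x})
    (hint2 : IntegrableOn (fun x => fstar x * gstar x) (Set.Iic c) stdGaussian1) :
    (∫ x in K, f x * g x ∂stdGaussian1)
      ≤ ∫ x in Set.Iic c, fstar x * gstar x ∂stdGaussian1 := by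
  have hfs0' : ∀ x ∈ Iic c, 0 ≤ fstar x := fun x _ => hfs0 x
  have hgs0' : ∀ x ∈ Iic c, 0 ≤ gstar x := fun x _ => hgs0 x
  have hfin : ∫⁻ x in Iic c, ENNReal.ofReal (fstar x) * ENNReal.ofReal (gstar x)
      ∂stdGaussian1 ≠ ⊤ := by
    simpa only [ENNReal.ofReal_mul (hfs0 _)] using hint2.lintegral_lt_top.ne
  rw [setIntegral_mul_eq_toReal_setLIntegral _ hK hfm hgm hf0 hg0,
    setIntegral_mul_eq_toReal_setLIntegral _ measurableSet_Iic hfsm hgsm hfs0' hgs0']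
  refine ENNReal.toReal_mono hfin ?_
  refine setLIntegral_ofReal_mul_le_of_measure_superlevel_inter_le _ hK measurableSet_Iic
    hfm hgm hfsm hgsm hf0 hg0 hfs0' hgs0' fun s t hs ht => ?_
  exact measure_inter_le_measure_inter_of_isLowerSet
    (isLowerSet_sep_Iic_lt_of_antitoneOn hfanti s) (isLowerSet_sep_Iic_lt_of_antitoneOn hganti t)
    (hflev s hs.le).ge (hglev t ht.le).ge

/-- Gaussian Hardy–Littlewood inequality: for nonnegative `f, g ∈ L²(γ₁, K)` and their
Ehrhard rearrangements `f*, g*` on the half-line `H_K = (-∞, c]` of the same Gaussian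
measure as `K` (monotone decreasing functions whose level sets have the same Gaussian
measures as those of `f`, `g`), one has `∫_K f g dγ₁ ≤ ∫_{H_K} f* g* dγ₁`. -/
theorem stmt5 (K : Set ℝ) (hK : MeasurableSet K)
    (f g fstar gstar : ℝ → ℝ)
    (hf0 : ∀ x ∈ K, 0 ≤ f x) (hg0 : ∀ x ∈ K, 0 ≤ g x)
    (hfs0 : ∀ x, 0 ≤ fstar x) (hgs0 : ∀ x, 0 ≤ gstar x)
    (hfm : Measurable f) (hgm : Measurable g)
    (hfsm : Measurable fstar) (hgsm : Measurable gstar)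
    (hfL2 : MemLp f 2 (stdGaussian1.restrict K))
    (hgL2 : MemLp g 2 (stdGaussian1.restrict K))
    (c : ℝ) (hc : stdGaussian1 (Set.Iic c) = stdGaussian1 K)
    (hfanti : AntitoneOn fstar (Set.Iic c))
    (hganti : AntitoneOn gstar (Set.Iic c))
    (hflev : ∀ t : ℝ, 0 ≤ t →
      stdGaussian1 {x ∈ Set.Iic c | t < fstar x} = stdGaussian1 {x ∈ K | t < f x})
    (hglev : ∀ t : ℝ, 0 ≤ t →
      stdGaussian1 {x ∈ Set.Iic c | t < gstar x} = stdGaussian1 {x ∈ K | t < g x})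
    (hint1 : IntegrableOn (fun x => f x * g x) K stdGaussian1)
    (hint2 : IntegrableOn (fun x => fstar x * gstar x) (Set.Iic c) stdGaussian1) :
    (∫ x in K, f x * g x ∂stdGaussian1)
      ≤ ∫ x in Set.Iic c, fstar x * gstar x ∂stdGaussian1 :=
  stmt5_general K hK f g fstar gstar hf0 hg0 hfs0 hgs0 hfm hgm hfsm hgsm c hfanti hganti hflev hglev
    hint2
end

section
/- Let F : ℝ → ℝ be a continuously differentiable increasing function, and let G be an antiderivative of t ↦ F(t) e^{-t²/2}. Then the composition G ∘ ψ^{-1} is convex on (0,1), where ψ(t) = (2π)^{-1/2} ∫_{-∞}^t e^{-s²/2} ds is the standard Gaussian cumulative distribution function. -/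
open MeasureTheory Real Set Filter

/-- If `F` is a `C¹` increasing function and `G' (t) = F t · exp (-t²/2)`, then
`G ∘ ψ⁻¹` is convex on `(0,1)`, where `ψ` is the standard Gaussian cdf. -/
theorem stmt7 (F G ψ ψinv : ℝ → ℝ)
    (hψ : ψ = fun t => ∫ s in Set.Iic t, (2 * π) ^ (-(1:ℝ) / 2) * Real.exp (-s ^ 2 / 2))
    (hinv : ∀ t ∈ Set.Ioo (0:ℝ) 1, ψ (ψinv t) = t)
    (hF : ContDiff ℝ 1 F) (hFmono : Monotone F)
    (hG : ∀ t, HasDerivAt G (F t * Real.exp (-t ^ 2 / 2)) t) :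
    ConvexOn ℝ (Set.Ioo (0:ℝ) 1) (G ∘ ψinv) := by
  set c : ℝ := (2 * π) ^ (-(1:ℝ) / 2) with hc
  have hcpos : (0:ℝ) < c := Real.rpow_pos_of_pos (by positivity) _
  have hgc : Continuous fun s : ℝ => c * Real.exp (-s ^ 2 / 2) := by
    fun_prop
  have hgint : Integrable (fun s : ℝ => c * Real.exp (-s ^ 2 / 2)) := by
    have h0 : Integrable (fun s : ℝ => Real.exp (-(2⁻¹:ℝ) * s ^ 2)) :=
      integrable_exp_neg_mul_sq (by norm_num)
    have heq : (fun s : ℝ => c * Real.exp (-s ^ 2 / 2))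
        = fun s : ℝ => c * Real.exp (-(2⁻¹:ℝ) * s ^ 2) := by
      funext s; ring_nf
    rw [heq]
    exact h0.const_mul c
  have hψd : ∀ t, HasDerivAt ψ (c * Real.exp (-t ^ 2 / 2)) t := by
    intro t
    have key : ψ = fun u => (∫ s in Iic (0:ℝ), c * Real.exp (-s ^ 2 / 2))
        + ∫ s in (0:ℝ)..u, c * Real.exp (-s ^ 2 / 2) := by
      funext u
      rw [hψ]
      rw [← intervalIntegral.integral_Iic_sub_Iic hgint.integrableOn hgint.integrableOn]
      ring
    rw [key]
    have hd : HasDerivAt (fun u => ∫ s in (0:ℝ)..u, c * Real.exp (-s ^ 2 / 2))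
        (c * Real.exp (-t ^ 2 / 2)) t :=
      intervalIntegral.integral_hasDerivAt_right (hgc.intervalIntegrable 0 t)
        (hgc.stronglyMeasurableAtFilter _ _) hgc.continuousAt
    exact hd.const_add _
  have hmono : StrictMono ψ := strictMono_of_deriv_pos fun x => by
    rw [(hψd x).deriv]; positivity
  have hinvmono : StrictMonoOn ψinv (Ioo (0:ℝ) 1) := by
    intro a ha b hb hab
    apply hmono.lt_iff_lt.mp
    rw [hinv a ha, hinv b hb]
    exact hab
  have hcont : ∀ t ∈ Ioo (0:ℝ) 1, ContinuousAt ψinv t := by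
    intro t ht
    rw [ContinuousAt]
    apply tendsto_order.2
    constructor
    · intro a ha
      have h1 : ψ a < t := by rw [← hinv t ht]; exact hmono ha
      filter_upwards [eventually_gt_nhds h1, Ioo_mem_nhds ht.1 ht.2] with u hu hu2
      exact hmono.lt_iff_lt.mp (by rw [hinv u hu2]; exact hu)
    · intro a ha
      have h1 : t < ψ a := by rw [← hinv t ht]; exact hmono ha
      filter_upwards [eventually_lt_nhds h1, Ioo_mem_nhds ht.1 ht.2] with u hu hu2
      exact hmono.lt_iff_lt.mp (by rw [hinv u hu2]; exact hu)
  have hinvd : ∀ t ∈ Ioo (0:ℝ) 1,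
      HasDerivAt ψinv (c * Real.exp (-(ψinv t) ^ 2 / 2))⁻¹ t := by
    intro t ht
    exact HasDerivAt.of_local_left_inverse (hcont t ht) (hψd (ψinv t))
      (by positivity)
      (by filter_upwards [Ioo_mem_nhds ht.1 ht.2] with u hu using hinv u hu)
  have hcomp : ∀ t ∈ Ioo (0:ℝ) 1, HasDerivAt (G ∘ ψinv) (c⁻¹ * F (ψinv t)) t := by
    intro t ht
    have h := (hG (ψinv t)).comp t (hinvd t ht)
    convert h using 1
    have he : Real.exp (-(ψinv t) ^ 2 / 2) ≠ 0 := (Real.exp_pos _).ne'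
    · rfl
    · rfl
    rw [mul_inv, mul_mul_mul_comm, mul_inv_cancel₀ (Real.exp_ne_zero _)]
    ring
  apply MonotoneOn.convexOn_of_deriv (convex_Ioo 0 1)
  · exact fun t ht => (hcomp t ht).continuousAt.continuousWithinAt
  · rw [interior_Ioo]
    exact fun t ht => (hcomp t ht).differentiableAt.differentiableWithinAt
  · rw [interior_Ioo]
    intro a ha b hb hab
    rw [(hcomp a ha).deriv, (hcomp b hb).deriv]
    apply mul_le_mul_of_nonneg_left _ (inv_nonneg.2 hcpos.le)
    rcases hab.lt_or_eq with h | h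
    · exact hFmono (hinvmono ha hb h).le
    · rw [h]
end
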